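/- arXiv:1810.07131 — 5 statements merged into one kernel-verified Lean document; each statement's English description precedes it below -/
import Mathlib

section
/- Let d ≥ 1 be an integer, δ > 0 and k > 0, and define g(α) = (kδ/2)^{α−d} Γ((d−α)/2)/Γ(α/2) − 2/((d−α) Γ(d/2)) for α ∈ (max(0, d−2), d) ∪ (d, d+2). Then lim_{α→d} g(α) = (1/Γ(d/2)) [ 2 log(2/(kδ)) + Γ'(1) + Γ'(d/2)/Γ(d/2) ]; in particular g extends to a continuous function of α on (max(0, d−2), d+2). -/
/-!
Write `c = kδ/2` and `F(α) = c^{α-d} Γ((d-α)/2 + 1) / Γ(α/2)`, so that `F(d) = 1/Γ(d/2)`.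
The recursion `Γ(t + 1) = t Γ(t)` at `t = (d-α)/2` turns `g(α)` into the difference quotient
`-2 (F(α) - F(d)) / (α - d)` of `F`, which is differentiable at `d`. Hence `g(α) → -2 F'(d)`,
and the product and quotient rules evaluate `-2 F'(d)` to the stated constant.
-/

open Filter Topology Set Real Function

noncomputable section

/-- The function `g` of the paper, with `c = kδ/2` and `s = d`. -/
def gammaPart (c s α : ℝ) : ℝ :=
  c ^ (α - s) * Gamma ((s - α) / 2) / Gamma (α / 2) - 2 / ((s - α) * Gamma (s / 2))

def regularizedGammaRatio (c s α : ℝ) : ℝ :=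
  c ^ (α - s) * Gamma ((s - α) / 2 + 1) / Gamma (α / 2)

def gammaPartLimit (c s : ℝ) : ℝ :=
  (Gamma (s / 2))⁻¹ * (-2 * log c + deriv Gamma 1 + deriv Gamma (s / 2) / Gamma (s / 2))

lemma differentiableAt_Gamma_of_neg_one_lt {x : ℝ} (hx : -1 < x) (hx₀ : x ≠ 0) :
    DifferentiableAt ℝ Gamma x := by
  refine differentiableAt_Gamma fun m hm => ?_
  rcases m with _ | m
  · simp_all
  · push_cast at hm
    linarith [(Nat.cast_nonneg m : (0 : ℝ) ≤ m)]

lemma regularizedGammaRatio_self (c s : ℝ) :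
    regularizedGammaRatio c s s = (Gamma (s / 2))⁻¹ := by
  simp [regularizedGammaRatio]

lemma gammaPart_eq_neg_two_mul_slope {c s α : ℝ} (hα : α ≠ s) :
    gammaPart c s α = -2 * slope (regularizedGammaRatio c s) s α := by
  have hαs : α - s ≠ 0 := sub_ne_zero.mpr hα
  have hsα : s - α ≠ 0 := sub_ne_zero.mpr hα.symm
  rw [slope_def_field, regularizedGammaRatio_self, regularizedGammaRatio, gammaPart,
    Gamma_add_one (div_ne_zero hsα two_ne_zero)]
  field_simp
  ring

lemma hasDerivAt_regularizedGammaRatio {c s : ℝ} (hc : 0 < c) (hs : 0 < s) :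
    HasDerivAt (regularizedGammaRatio c s)
      ((log c - deriv Gamma 1 / 2 - deriv Gamma (s / 2) / (2 * Gamma (s / 2))) / Gamma (s / 2))
      s := by
  have hΓs : Gamma (s / 2) ≠ 0 := (Gamma_pos_of_pos (half_pos hs)).ne'
  have hpow : HasDerivAt (fun α => c ^ (α - s)) (log c) s := by
    simpa using ((hasDerivAt_id s).sub_const s).const_rpow hc
  have hnum : HasDerivAt (fun α => Gamma ((s - α) / 2 + 1)) (deriv Gamma 1 * (-1 / 2)) s := by
    have hΓ : HasDerivAt Gamma (deriv Gamma 1) ((s - s) / 2 + 1) := by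
      rw [sub_self, zero_div, zero_add]
      exact (differentiableAt_Gamma_of_neg_one_lt (by norm_num) one_ne_zero).hasDerivAt
    exact hΓ.comp s ((((hasDerivAt_id' s).const_sub s).div_const 2).add_const 1)
  have hden : HasDerivAt (fun α => Gamma (α / 2)) (deriv Gamma (s / 2) * (1 / 2)) s := by
    have hΓ : HasDerivAt Gamma (deriv Gamma (s / 2)) (s / 2) :=
      (differentiableAt_Gamma_of_neg_one_lt (by linarith) (half_pos hs).ne').hasDerivAt
    exact hΓ.comp s ((hasDerivAt_id' s).div_const 2)
  refine ((hpow.mul hnum).div hden hΓs).congr_deriv ?_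
  simp only [Pi.mul_apply, sub_self, zero_div, zero_add, rpow_zero, Gamma_one]
  field_simp
  ring

theorem tendsto_gammaPart {c s : ℝ} (hc : 0 < c) (hs : 0 < s) :
    Tendsto (gammaPart c s) (𝓝[≠] s) (𝓝 (gammaPartLimit c s)) := by
  have hΓs : Gamma (s / 2) ≠ 0 := (Gamma_pos_of_pos (half_pos hs)).ne'
  have hslope := (hasDerivAt_regularizedGammaRatio hc hs).tendsto_slope.const_mul (-2)
  have heq : (fun α => -2 * slope (regularizedGammaRatio c s) s α) =ᶠ[𝓝[≠] s]
      gammaPart c s :=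
    eventually_nhdsWithin_of_forall fun α hα => (gammaPart_eq_neg_two_mul_slope hα).symm
  convert hslope.congr' heq using 2
  rw [gammaPartLimit]
  field_simp
  ring

theorem continuousAt_gammaPart {c s α : ℝ} (hc : 0 < c) (hs : 0 < s) (hα₀ : 0 < α)
    (hα : α < s + 2) (hαs : α ≠ s) : ContinuousAt (gammaPart c s) α := by
  have hsα : s - α ≠ 0 := sub_ne_zero.mpr hαs.symm
  have hpow : ContinuousAt (fun α => c ^ (α - s)) α := by fun_prop (disch := positivity)
  have hnum : ContinuousAt (fun α => Gamma ((s - α) / 2)) α :=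
    (differentiableAt_Gamma_of_neg_one_lt (by linarith)
      (div_ne_zero hsα two_ne_zero)).continuousAt.comp (f := fun α => (s - α) / 2) (by fun_prop)
  have hden : ContinuousAt (fun α => Gamma (α / 2)) α :=
    (differentiableAt_Gamma_of_neg_one_lt (by linarith) (half_pos hα₀).ne').continuousAt.comp
      (f := fun α => α / 2) (by fun_prop)
  have hΓα : Gamma (α / 2) ≠ 0 := (Gamma_pos_of_pos (half_pos hα₀)).ne'
  have hΓs : Gamma (s / 2) ≠ 0 := (Gamma_pos_of_pos (half_pos hs)).ne'
  exact ((hpow.mul hnum).div hden hΓα).sub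
    (continuousAt_const.div (by fun_prop) (mul_ne_zero hsα hΓs))

theorem continuousOn_update_gammaPart {c s : ℝ} (hc : 0 < c) (hs : 0 < s) :
    ContinuousOn (update (gammaPart c s) s (gammaPartLimit c s)) (Ioo 0 (s + 2)) := by
  intro α hα
  refine ContinuousAt.continuousWithinAt ?_
  rcases eq_or_ne α s with rfl | hαs
  · exact continuousAt_update_same.mpr (tendsto_gammaPart hc hs)
  · exact (continuousAt_update_of_ne hαs).mpr (continuousAt_gammaPart hc hs hα.1 hα.2 hαs)

end

/-- For `d ≥ 1`, `δ > 0`, `k > 0`, the function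
`g(α) = (kδ/2)^{α−d} Γ((d−α)/2)/Γ(α/2) − 2/((d−α) Γ(d/2))`, defined for
`α ∈ (max(0,d−2), d) ∪ (d, d+2)`, satisfies
`lim_{α→d} g(α) = (1/Γ(d/2)) [ 2 log(2/(kδ)) + Γ'(1) + Γ'(d/2)/Γ(d/2) ]`;
in particular `g` extends to a continuous function of `α` on `(max(0,d−2), d+2)`. -/
theorem removable_singularity_at_d (d : ℕ) (hd : 1 ≤ d) (δ k : ℝ) (hδ : 0 < δ) (hk : 0 < k) :
    Filter.Tendsto
      (fun α : ℝ =>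
        (k * δ / 2) ^ (α - (d : ℝ)) * Real.Gamma (((d : ℝ) - α) / 2) / Real.Gamma (α / 2) -
          2 / (((d : ℝ) - α) * Real.Gamma ((d : ℝ) / 2)))
      (nhdsWithin (d : ℝ) {(d : ℝ)}ᶜ)
      (nhds ((1 / Real.Gamma ((d : ℝ) / 2)) *
        (2 * Real.log (2 / (k * δ)) + deriv Real.Gamma 1 +
          deriv Real.Gamma ((d : ℝ) / 2) / Real.Gamma ((d : ℝ) / 2)))) ∧
    ∃ G : ℝ → ℝ,
      ContinuousOn G (Set.Ioo (max 0 ((d : ℝ) - 2)) ((d : ℝ) + 2)) ∧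
      ∀ α ∈ Set.Ioo (max 0 ((d : ℝ) - 2)) ((d : ℝ) + 2), α ≠ (d : ℝ) →
        G α = (k * δ / 2) ^ (α - (d : ℝ)) * Real.Gamma (((d : ℝ) - α) / 2) /
            Real.Gamma (α / 2) -
          2 / (((d : ℝ) - α) * Real.Gamma ((d : ℝ) / 2)) := by
  have hc : 0 < k * δ / 2 := by positivity
  have hs : (0 : ℝ) < d := Nat.cast_pos.mpr hd
  have hlimit : gammaPartLimit (k * δ / 2) d = 1 / Gamma ((d : ℝ) / 2) *
      (2 * log (2 / (k * δ)) + deriv Gamma 1 +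
        deriv Gamma ((d : ℝ) / 2) / Gamma ((d : ℝ) / 2)) := by
    rw [gammaPartLimit, ← inv_div (k * δ) 2, log_inv]
    ring
  refine ⟨hlimit ▸ tendsto_gammaPart hc hs,
    update (gammaPart (k * δ / 2) d) d (gammaPartLimit (k * δ / 2) d), ?_,
    fun α _ hα => update_of_ne hα _ _⟩
  exact (continuousOn_update_gammaPart hc hs).mono (Ioo_subset_Ioo_left (le_max_left _ _))
end

section
/- Let α, β be real numbers, neither of which is a non-positive integer, let z ≠ 0 be real, and set a_m = (α)_m (β)_m / (−z)^m for integers m ≥ 0, and D_n^{(k)} = Σ_{j=0}^k C(k,j) (−1)^{k−j} / a_{n+j+1} for integers n ≥ 0, k ≥ 0, with the conventions D_n^{(−1)} = D_n^{(−2)} = 0. Then for all integers n ≥ 0 and k ≥ 0, (α+n+k+1)(β+n+k+1) D_n^{(k+1)} + [ z + k(α+β+2n+2k+1) + (α+n+k+1)(β+n+k+1) ] D_n^{(k)} + k(α+β+2n+3k) D_n^{(k−1)} + k(k−1) D_n^{(k−2)} = 0. -/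
/-!
With `g m = 1 / a (m + 1)` one has `D k n = Δ^k g n`, and `a (m + 2) = a (m + 1) p(m) / (-z)`
with `p(m) = (α+m+1)(β+m+1)` gives the first-order recurrence `p(m) g (m+1) + z g m = 0`.
Applying `Δ^k` and expanding `Δ^k (p · g(· + 1))` by the Leibniz rule for forward differences,
only the first three differences of the quadratic `p` survive. This gives a four-term recurrence
in the shifted differences `Δ^j g (n+1)` (proved by induction on `k`), and Pascal's rule
`Δ^{j+1} g n = Δ^j g (n+1) - Δ^j g n` turns it into the stated one.
-/

/-- The Pochhammer symbol (rising factorial) `(x)_n = x(x+1)⋯(x+n−1)`, with `(x)_0 = 1`. -/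
noncomputable def poch (x : ℝ) : ℕ → ℝ
  | 0 => 1
  | n + 1 => poch x n * (x + n)

theorem fwdDiff_iter_succ_apply {M G : Type*} [AddCommMonoid M] [AddCommGroup G]
    (h : M) (f : M → G) (k : ℕ) (y : M) :
    (fwdDiff h)^[k + 1] f y = (fwdDiff h)^[k] f (y + h) - (fwdDiff h)^[k] f y := by
  rw [Function.iterate_succ_apply']
  rfl

section Pascal

variable {R : Type*} [Ring R] (f : ℕ → R) (k m : ℕ)

/-- Pascal's rule at level `k - 1`, multiplied by `k` so that it also holds for `k = 0`,
where `k - 1` truncates. -/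
theorem natCast_mul_fwdDiff_iter_apply :
    (k : R) * (fwdDiff 1)^[k] f m =
      k * ((fwdDiff 1)^[k - 1] f (m + 1) - (fwdDiff 1)^[k - 1] f m) := by
  cases k with
  | zero => simp
  | succ k => rw [Nat.add_sub_cancel, fwdDiff_iter_succ_apply]

theorem natCast_mul_pred_mul_fwdDiff_iter_pred_apply :
    (k : R) * (k - 1) * (fwdDiff 1)^[k - 1] f m =
      k * (k - 1) * ((fwdDiff 1)^[k - 2] f (m + 1) - (fwdDiff 1)^[k - 2] f m) := by
  cases k with
  | zero => simp
  | succ k =>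
    rw [Nat.add_sub_cancel, show k + 1 - 2 = k - 1 by omega, Nat.cast_succ,
      add_sub_cancel_right, mul_assoc, natCast_mul_fwdDiff_iter_apply, mul_assoc]

end Pascal

section Recurrence

variable {α β z : ℝ} {g : ℕ → ℝ}

theorem fwdDiff_iter_shift_recurrence
    (hg : ∀ m : ℕ, (α + m + 1) * (β + m + 1) * g (m + 1) + z * g m = 0) (k n : ℕ) :
    (α + n + k + 1) * (β + n + k + 1) * (fwdDiff 1)^[k] g (n + 1)
      + k * (α + β + 2 * n + 2 * k + 1) * (fwdDiff 1)^[k - 1] g (n + 1)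
      + k * ((k : ℝ) - 1) * (fwdDiff 1)^[k - 2] g (n + 1)
      + z * (fwdDiff 1)^[k] g n = 0 := by
  induction k generalizing n with
  | zero => simpa using hg n
  | succ k ih =>
    rw [Nat.add_sub_cancel, show k + 1 - 2 = k - 1 by omega]
    have ih_succ := ih (n + 1)
    push_cast at ih_succ ⊢
    linear_combination ih_succ - ih n + z * fwdDiff_iter_succ_apply 1 g k n
      + (α + n + k + 2) * (β + n + k + 2) * fwdDiff_iter_succ_apply 1 g k (n + 1)
      + (α + β + 2 * n + 2 * k + 3) * natCast_mul_fwdDiff_iter_apply g k (n + 1)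
      + natCast_mul_pred_mul_fwdDiff_iter_pred_apply g k (n + 1)

theorem fwdDiff_iter_recurrence
    (hg : ∀ m : ℕ, (α + m + 1) * (β + m + 1) * g (m + 1) + z * g m = 0) (n k : ℕ) :
    (α + n + k + 1) * (β + n + k + 1) * (fwdDiff 1)^[k + 1] g n
      + (z + k * (α + β + 2 * n + 2 * k + 1) + (α + n + k + 1) * (β + n + k + 1))
        * (fwdDiff 1)^[k] g n
      + k * (α + β + 2 * n + 3 * k) * (fwdDiff 1)^[k - 1] g n
      + k * ((k : ℝ) - 1) * (fwdDiff 1)^[k - 2] g n = 0 := by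
  linear_combination fwdDiff_iter_shift_recurrence hg k n
    + (α + n + k + 1) * (β + n + k + 1) * fwdDiff_iter_succ_apply 1 g k n
    + (α + β + 2 * n + 2 * k + 1) * natCast_mul_fwdDiff_iter_apply g k n
    + natCast_mul_pred_mul_fwdDiff_iter_pred_apply g k n

end Recurrence

theorem poch_mul_poch_div_pow_succ (α β w : ℝ) (m : ℕ) :
    poch α (m + 1) * poch β (m + 1) / w ^ (m + 1) =
      poch α m * poch β m / w ^ m * ((α + m) * (β + m) / w) := by
  rw [poch, poch, pow_succ]
  ring

theorem add_natCast_ne_zero {x : ℝ} (hx : ∀ m : ℕ, x ≠ -(m : ℝ)) (m : ℕ) : x + m ≠ 0 :=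
  fun h => hx m (eq_neg_of_add_eq_zero_left h)

theorem mul_inv_succ_add_mul_inv_eq_zero {b p : ℕ → ℝ} {z : ℝ}
    (hb : ∀ m, b (m + 1) = b m * (p m / -z)) (hp : ∀ m, p m ≠ 0) (m : ℕ) :
    p m * (b (m + 1))⁻¹ + z * (b m)⁻¹ = 0 := by
  rw [hb, mul_inv, inv_div]
  have hpm := hp m
  field_simp
  ring

theorem drummond_denominator_recurrence_general
    (α β z : ℝ) (hα : ∀ m : ℕ, α ≠ -(m : ℝ)) (hβ : ∀ m : ℕ, β ≠ -(m : ℝ))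
    (a : ℕ → ℝ) (ha : ∀ m : ℕ, a m = poch α m * poch β m / (-z) ^ m)
    (D : ℕ → ℕ → ℝ)
    (hD : ∀ k n : ℕ, D k n =
      ∑ j ∈ Finset.range (k + 1), (Nat.choose k j : ℝ) * (-1) ^ (k - j) / a (n + j + 1)) :
    ∀ n k : ℕ,
      (α + n + k + 1) * (β + n + k + 1) * D (k + 1) n +
        (z + k * (α + β + 2 * n + 2 * k + 1) + (α + n + k + 1) * (β + n + k + 1)) * D k n +
        k * (α + β + 2 * n + 3 * k) * D (k - 1) n +
        k * ((k : ℝ) - 1) * D (k - 2) n = 0 := by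
  set g : ℕ → ℝ := fun m => (a (m + 1))⁻¹
  have hDg : ∀ k n, D k n = (fwdDiff 1)^[k] g n := by
    intro k n
    rw [hD, fwdDiff_iter_eq_sum_shift]
    refine Finset.sum_congr rfl fun j _ => ?_
    simp only [g, zsmul_eq_mul, smul_eq_mul, mul_one]
    push_cast
    ring
  have hg : ∀ m : ℕ, (α + m + 1) * (β + m + 1) * g (m + 1) + z * g m = 0 :=
    mul_inv_succ_add_mul_inv_eq_zero (b := fun m => a (m + 1))
      (fun m => by rw [ha, ha, poch_mul_poch_div_pow_succ]; push_cast; ring)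
      (fun m => mul_ne_zero (by simpa [add_assoc] using add_natCast_ne_zero hα (m + 1))
        (by simpa [add_assoc] using add_natCast_ne_zero hβ (m + 1)))
  intro n k
  simp only [hDg]
  exact fwdDiff_iter_recurrence hg n k

/-- With `a_m = (α)_m (β)_m / (−z)^m` and
`D_n^{(k)} = Σ_{j=0}^k C(k,j) (−1)^{k−j} / a_{n+j+1}` (and `D_n^{(−1)} = D_n^{(−2)} = 0`),
the denominators of Drummond's sequence transformation satisfy, for all `n, k ≥ 0`,
`(α+n+k+1)(β+n+k+1) D_n^{(k+1)} + [z + k(α+β+2n+2k+1) + (α+n+k+1)(β+n+k+1)] D_n^{(k)}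
 + k(α+β+2n+3k) D_n^{(k−1)} + k(k−1) D_n^{(k−2)} = 0`.
(The truncated subtractions `k − 1`, `k − 2` are harmless: the corresponding coefficients
`k(α+β+2n+3k)` and `k(k−1)` vanish for `k = 0` resp. `k ∈ {0, 1}`.) -/
theorem drummond_denominator_recurrence
    (α β z : ℝ) (hα : ∀ m : ℕ, α ≠ -(m : ℝ)) (hβ : ∀ m : ℕ, β ≠ -(m : ℝ)) (hz : z ≠ 0)
    (a : ℕ → ℝ) (ha : ∀ m : ℕ, a m = poch α m * poch β m / (-z) ^ m)
    (D : ℕ → ℕ → ℝ)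
    (hD : ∀ k n : ℕ, D k n =
      ∑ j ∈ Finset.range (k + 1), (Nat.choose k j : ℝ) * (-1) ^ (k - j) / a (n + j + 1)) :
    ∀ n k : ℕ,
      (α + n + k + 1) * (β + n + k + 1) * D (k + 1) n +
        (z + k * (α + β + 2 * n + 2 * k + 1) + (α + n + k + 1) * (β + n + k + 1)) * D k n +
        k * (α + β + 2 * n + 3 * k) * D (k - 1) n +
        k * ((k : ℝ) - 1) * D (k - 2) n = 0 :=
  drummond_denominator_recurrence_general α β z hα hβ a ha D hD
end

section
/- Let α, β be real numbers, neither of which is a non-positive integer, let z ≠ 0 be real, and set a_m = (α)_m (β)_m / (−z)^m, s_n = Σ_{m=0}^n a_m, and N_n^{(k)} = Σ_{j=0}^k C(k,j) (−1)^{k−j} s_{n+j} / a_{n+j+1} for integers n ≥ 0, k ≥ 0, with the convention N_n^{(−1)} = 0. Then for all integers n ≥ 0 and k ≥ 1, (α+n+k+1)(β+n+k+1) N_n^{(k+1)} + [ z + k(α+β+2n+2k+1) + (α+n+k+1)(β+n+k+1) ] N_n^{(k)} + k(α+β+2n+3k) N_n^{(k−1)} + k(k−1) N_n^{(k−2)}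 = 0. -/
open fwdDiff Finset

section FiniteDifferences

variable {M G : Type*} [AddCommMonoid M] [AddCommGroup G]

theorem fwdDiff_iter_const_eq_zero (h : M) (c : G) {k : ℕ} (hk : k ≠ 0) :
    Δ_[h] ^[k] (fun _ : M => c) = 0 := by
  obtain ⟨j, rfl⟩ := Nat.exists_eq_succ_of_ne_zero hk
  rw [Function.iterate_succ_apply, fwdDiff_const]
  exact Function.iterate_fixed (fwdDiff_const h 0) j

theorem fwdDiff_iter_apply_add_one (f : ℕ → G) (k n : ℕ) :
    Δ_[1] ^[k] f (n + 1) = Δ_[1] ^[k + 1] f n + Δ_[1] ^[k] f n := by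
  rw [Function.iterate_succ_apply', fwdDiff, sub_add_cancel]

variable {R : Type*} [CommRing R]

theorem fwdDiff_iter_succ_linear_mul (c : R) (v : ℕ → R) (k n : ℕ) :
    Δ_[1] ^[k + 1] (fun m => (m + c) * v m) n
      = (n + c + (k + 1)) * Δ_[1] ^[k + 1] v n + (k + 1) * Δ_[1] ^[k] v n := by
  induction k generalizing n with
  | zero =>
    simp only [zero_add, Function.iterate_one, Function.iterate_zero_apply, fwdDiff]
    push_cast
    ring
  | succ k ih =>
    rw [Function.iterate_succ_apply' _ (k + 1), fwdDiff, ih, ih,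
      fwdDiff_iter_apply_add_one v (k + 1), fwdDiff_iter_apply_add_one v k]
    push_cast
    ring

theorem fwdDiff_iter_linear_mul (c : R) (v : ℕ → R) (k n : ℕ) :
    Δ_[1] ^[k] (fun m => (m + c) * v m) n
      = (n + c + k) * Δ_[1] ^[k] v n + k * Δ_[1] ^[k - 1] v n := by
  cases k with
  | zero => simp
  | succ k => simpa using fwdDiff_iter_succ_linear_mul c v k n

theorem fwdDiff_iter_quadratic_mul (a b : R) (v : ℕ → R) (k n : ℕ) :
    Δ_[1] ^[k] (fun m => (m + a) * (m + b) * v m) n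
      = (n + a + k) * (n + b + k) * Δ_[1] ^[k] v n
        + k * (2 * n + a + b + 2 * k - 1) * Δ_[1] ^[k - 1] v n
        + k * (k - 1) * Δ_[1] ^[k - 2] v n := by
  simp only [mul_assoc _ _ (v _)]
  rw [fwdDiff_iter_linear_mul, fwdDiff_iter_linear_mul, fwdDiff_iter_linear_mul]
  cases k with
  | zero => simp [mul_assoc]
  | succ k =>
    rw [Nat.add_sub_cancel, show k + 1 - 2 = k - 1 by omega]
    push_cast
    ring

theorem fwdDiff_iter_add_mul_eq_zero {f g : ℕ → R} {c : R} (h : ∀ m, f m + c * g m + c = 0)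
    {k : ℕ} (hk : k ≠ 0) (n : ℕ) : Δ_[1] ^[k] f n + c * Δ_[1] ^[k] g n = 0 := by
  have h' := congrFun (congrArg (Δ_[1] ^[k]) (funext h : f + c • g + (fun _ => c) = fun _ => 0)) n
  simpa [fwdDiff_iter_const_eq_zero _ _ hk] using h'

end FiniteDifferences

theorem poch_ne_zero {x : ℝ} (hx : ∀ m : ℕ, x ≠ -(m : ℝ)) (n : ℕ) : poch x n ≠ 0 := by
  induction n with
  | zero => exact one_ne_zero
  | succ n ih => exact mul_ne_zero ih fun h => hx n (eq_neg_of_add_eq_zero_left h)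

theorem poch_mul_poch_div_pow_succ_mul (α β z : ℝ) (hz : z ≠ 0) (m : ℕ) :
    poch α (m + 1) * poch β (m + 1) / (-z) ^ (m + 1) * (-z)
      = poch α m * poch β m / (-z) ^ m * ((α + m) * (β + m)) := by
  rw [pow_succ, poch, poch]
  field_simp

theorem partialSum_div_succ_recurrence {K : Type*} [Field K] {a p s : ℕ → K} {c : K}
    (ha : ∀ m, a m ≠ 0) (hratio : ∀ m, a (m + 1) * c = a m * p m)
    (hs : ∀ n, s n = ∑ i ∈ range (n + 1), a i) (m : ℕ) :
    p (m + 1) * (s (m + 1) / a (m + 2)) = c * (s m / a (m + 1)) + c := by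
  have hp : p (m + 1) / a (m + 2) = c / a (m + 1) := by
    rw [div_eq_div_iff (ha _) (ha _)]
    linear_combination -hratio (m + 1)
  have hs' : s (m + 1) = s m + a (m + 1) := by rw [hs, hs, sum_range_succ]
  rw [mul_div_left_comm, hp, hs']
  field_simp [ha (m + 1)]

theorem poch_partialSum_div_recurrence {α β z : ℝ} (hα : ∀ m : ℕ, α ≠ -(m : ℝ))
    (hβ : ∀ m : ℕ, β ≠ -(m : ℝ)) (hz : z ≠ 0) {a s : ℕ → ℝ}
    (ha : ∀ m : ℕ, a m = poch α m * poch β m / (-z) ^ m)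
    (hs : ∀ n : ℕ, s n = ∑ m ∈ range (n + 1), a m) (m : ℕ) :
    (m + (α + 1)) * (m + (β + 1)) * (s (m + 1) / a (m + 2)) + z * (s m / a (m + 1)) + z = 0 := by
  have ha0 : ∀ m, a m ≠ 0 := fun m => by
    rw [ha]
    exact div_ne_zero (mul_ne_zero (poch_ne_zero hα m) (poch_ne_zero hβ m))
      (pow_ne_zero _ (neg_ne_zero.2 hz))
  have := partialSum_div_succ_recurrence ha0
    (fun m => by rw [ha, ha]; exact poch_mul_poch_div_pow_succ_mul α β z hz m) hs m
  push_cast at this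
  linear_combination this

/-- With `a_m = (α)_m (β)_m / (−z)^m`, `s_n = Σ_{m=0}^n a_m` and
`N_n^{(k)} = Σ_{j=0}^k C(k,j) (−1)^{k−j} s_{n+j} / a_{n+j+1}` (and `N_n^{(−1)} = 0`),
the numerators of Drummond's sequence transformation satisfy, for all `n ≥ 0`, `k ≥ 1`,
`(α+n+k+1)(β+n+k+1) N_n^{(k+1)} + [z + k(α+β+2n+2k+1) + (α+n+k+1)(β+n+k+1)] N_n^{(k)}
 + k(α+β+2n+3k) N_n^{(k−1)} + k(k−1) N_n^{(k−2)} = 0`.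
(The truncated subtraction `k − 2` is harmless: its coefficient `k(k−1)` vanishes for `k = 1`.) -/
theorem drummond_numerator_recurrence
    (α β z : ℝ) (hα : ∀ m : ℕ, α ≠ -(m : ℝ)) (hβ : ∀ m : ℕ, β ≠ -(m : ℝ)) (hz : z ≠ 0)
    (a : ℕ → ℝ) (ha : ∀ m : ℕ, a m = poch α m * poch β m / (-z) ^ m)
    (s : ℕ → ℝ) (hs : ∀ n : ℕ, s n = ∑ m ∈ Finset.range (n + 1), a m)
    (N : ℕ → ℕ → ℝ)
    (hN : ∀ k n : ℕ, N k n =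
      ∑ j ∈ Finset.range (k + 1),
        (Nat.choose k j : ℝ) * (-1) ^ (k - j) * s (n + j) / a (n + j + 1)) :
    ∀ n k : ℕ, 1 ≤ k →
      (α + n + k + 1) * (β + n + k + 1) * N (k + 1) n +
        (z + k * (α + β + 2 * n + 2 * k + 1) + (α + n + k + 1) * (β + n + k + 1)) * N k n +
        k * (α + β + 2 * n + 3 * k) * N (k - 1) n +
        k * ((k : ℝ) - 1) * N (k - 2) n = 0 := by
  intro n k hk
  set u : ℕ → ℝ := fun m => s m / a (m + 1)
  have hNu : ∀ j, N j n = Δ_[1] ^[j] u n := fun j => by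
    rw [hN, fwdDiff_iter_eq_sum_shift]
    refine sum_congr rfl fun i _ => ?_
    simp only [smul_eq_mul, mul_one, zsmul_eq_mul, Int.cast_mul, Int.cast_pow, Int.cast_neg,
      Int.cast_one, Int.cast_natCast, u]
    ring
  have key := fwdDiff_iter_add_mul_eq_zero
    (f := fun m => (m + (α + 1)) * (m + (β + 1)) * u (m + 1))
    (poch_partialSum_div_recurrence hα hβ hz ha hs) (by omega : k ≠ 0) n
  rw [fwdDiff_iter_quadratic_mul] at key
  simp only [fwdDiff_iter_comp_add, fwdDiff_iter_apply_add_one, Nat.sub_add_cancel hk] at key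
  -- At `k = 1` the truncated `k - 2 + 1` is not `k - 1`, but its coefficient vanishes.
  have hk2 : (k : ℝ) * (k - 1) * Δ_[1] ^[k - 2 + 1] u n = k * (k - 1) * Δ_[1] ^[k - 1] u n := by
    rcases (by omega : k = 1 ∨ k - 2 + 1 = k - 1) with rfl | h
    · simp
    · rw [h]
  simp only [hNu]
  linear_combination key - hk2
end

section
/- Let α > 0 and β > 0 be real and z > 0. With a_m = (α)_m (β)_m / (−z)^m and D_n^{(k)} = Σ_{j=0}^k C(k,j) (−1)^{k−j} / a_{n+j+1}, one has D_n^{(k)} ≠ 0 for all integers n ≥ 0 and k ≥ 0; hence the Drummond approximants T_n^{(k)} = N_n^{(k)}/D_n^{(k)} (with N_n^{(k)} = Σ_{j=0}^k C(k,j)(−1)^{k−j} s_{n+j}/a_{n+j+1} and s_n = Σ_{m=0}^n a_m) are well defined for every z > 0. -/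
open Finset

lemma poch_eq_ascPochhammer_eval (x : ℝ) : ∀ n, poch x n = (ascPochhammer ℝ n).eval x
  | 0 => by simp [poch]
  | n + 1 => by rw [poch, ascPochhammer_succ_eval, poch_eq_ascPochhammer_eval x n]

lemma poch_pos {x : ℝ} (hx : 0 < x) (n : ℕ) : 0 < poch x n := by
  rw [poch_eq_ascPochhammer_eval]
  exact ascPochhammer_pos n x hx

lemma neg_one_pow_sub_div_neg_one_pow_mul {K : Type*} [Field K] {k j : ℕ} (hj : j ≤ k) (n : ℕ)
    (b : K) :
    (-1 : K) ^ (k - j) / ((-1) ^ (n + j + 1) * b) = (-1) ^ (k + n + 1) / b := by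
  have hsign : (-1 : K) ^ (k - j) = (-1) ^ (n + j + 1) * (-1) ^ (k + n + 1) := by
    rw [← pow_add, neg_one_pow_eq_pow_mod_two, neg_one_pow_eq_pow_mod_two (n := _ + (k + n + 1))]
    congr 1
    omega
  rw [hsign, mul_div_mul_left _ _ (pow_ne_zero _ (neg_ne_zero.mpr one_ne_zero))]

lemma sum_choose_mul_neg_one_pow_div_ne_zero {K : Type*} [Field K] [LinearOrder K]
    [IsStrictOrderedRing K] {a b : ℕ → K} (hb : ∀ m, 0 < b m)
    (hab : ∀ m, a m = (-1) ^ m * b m) (k n : ℕ) :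
    ∑ j ∈ range (k + 1), (k.choose j : K) * (-1) ^ (k - j) / a (n + j + 1) ≠ 0 := by
  have hfactor : ∑ j ∈ range (k + 1), (k.choose j : K) * (-1) ^ (k - j) / a (n + j + 1) =
      (-1) ^ (k + n + 1) * ∑ j ∈ range (k + 1), (k.choose j : K) / b (n + j + 1) := by
    rw [mul_sum]
    refine sum_congr rfl fun j hj => ?_
    rw [hab, mul_div_assoc,
      neg_one_pow_sub_div_neg_one_pow_mul (Nat.lt_succ_iff.mp (mem_range.mp hj))]
    ring
  have hpos : 0 < ∑ j ∈ range (k + 1), (k.choose j : K) / b (n + j + 1) :=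
    sum_pos (fun j hj => div_pos (mod_cast Nat.choose_pos (Nat.lt_succ_iff.mp (mem_range.mp hj)))
      (hb _)) nonempty_range_add_one
  rw [hfactor]
  exact mul_ne_zero (pow_ne_zero _ (neg_ne_zero.mpr one_ne_zero)) hpos.ne'

/-- For `α, β > 0` and `z > 0`, with `a_m = (α)_m (β)_m / (−z)^m` and
`D_n^{(k)} = Σ_{j=0}^k C(k,j) (−1)^{k−j} / a_{n+j+1}`, one has `D_n^{(k)} ≠ 0` for all
`n, k ≥ 0`; hence the Drummond approximants `T_n^{(k)} = N_n^{(k)}/D_n^{(k)}` (with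
`N_n^{(k)} = Σ_{j=0}^k C(k,j)(−1)^{k−j} s_{n+j}/a_{n+j+1}`, `s_n = Σ_{m=0}^n a_m`) are
well defined for every `z > 0`. -/
theorem drummond_denominator_nonzero
    (α β z : ℝ) (hα : 0 < α) (hβ : 0 < β) (hz : 0 < z)
    (a : ℕ → ℝ) (ha : ∀ m : ℕ, a m = poch α m * poch β m / (-z) ^ m)
    (D : ℕ → ℕ → ℝ)
    (hD : ∀ k n : ℕ, D k n =
      ∑ j ∈ Finset.range (k + 1), (Nat.choose k j : ℝ) * (-1) ^ (k - j) / a (n + j + 1)) :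
    ∀ n k : ℕ, D k n ≠ 0 := by
  intro n k
  have hb : ∀ m, 0 < poch α m * poch β m / z ^ m := fun m =>
    div_pos (mul_pos (poch_pos hα m) (poch_pos hβ m)) (pow_pos hz m)
  have hab : ∀ m, a m = (-1) ^ m * (poch α m * poch β m / z ^ m) := fun m => by
    rw [ha, neg_pow, mul_comm ((-1 : ℝ) ^ m), ← div_div, div_eq_mul_inv _ ((-1 : ℝ) ^ m),
      ← inv_pow, inv_neg_one, mul_comm]
  rw [hD]
  exact sum_choose_mul_neg_one_pow_div_ne_zero hb hab k n
end

section
/- Let (s_m)_{m≥0} be a real sequence with Δs_m = s_{m+1} − s_m ≠ 0 for all m, let k ≥ 1 and n ≥ 0 be integers, and suppose there exist a real number s and a polynomial p of degree at most k − 1 such that s − s_m = (Δs_m) p(m) for all m ≥ n. Define D_n^{(k)} = Σ_{j=0}^k C(k,j)(−1)^{k−j} / Δs_{n+j} and N_n^{(k)} = Σ_{j=0}^k C(k,j)(−1)^{k−j} s_{n+j} / Δs_{n+j}. If D_n^{(k)} ≠ 0, then N_n^{(k)} / D_n^{(k)} = s. -/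
/-!
Substituting `s_m = s - Δs_m p(m)` turns `N_n^{(k)}` into `s · D_n^{(k)} - Δ^k p(n)`, and the
`k`-th forward difference of a polynomial of degree `< k` vanishes.
-/

open Finset

theorem Polynomial.sum_range_choose_mul_neg_one_pow_mul_eval_add_eq_zero {R : Type*}
    [CommRing R] {P : Polynomial R} {k : ℕ} (hP : P.natDegree < k) (x : R) :
    ∑ j ∈ range (k + 1), (k.choose j : R) * (-1) ^ (k - j) * P.eval (x + j) = 0 := by
  have hshift := fwdDiff_iter_eq_sum_shift (1 : R) P.eval k x
  rw [Polynomial.fwdDiff_iter_eq_zero_of_degree_lt hP, Pi.zero_apply] at hshift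
  rw [hshift]
  refine sum_congr rfl fun j _ => ?_
  simp only [zsmul_eq_mul, nsmul_eq_mul, mul_one]
  push_cast
  ring

theorem Finset.sum_mul_div_eq_sum_div_mul_of_sub_eq_mul {ι K : Type*} [Field K] (t : Finset ι)
    (w s d q : ι → K) (L : K) (hd : ∀ i ∈ t, d i ≠ 0) (hs : ∀ i ∈ t, L - s i = d i * q i)
    (hq : ∑ i ∈ t, w i * q i = 0) :
    ∑ i ∈ t, w i * s i / d i = (∑ i ∈ t, w i / d i) * L := by
  have hterm : ∀ i ∈ t, w i * s i / d i = w i / d i * L - w i * q i := fun i hi => by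
    rw [show s i = L - d i * q i by linear_combination -hs i hi]
    field_simp [hd i hi]
  rw [sum_congr rfl hterm, sum_sub_distrib, hq, sub_zero, sum_mul]

/-- Let `(s_m)` be a real sequence with `Δs_m = s_{m+1} − s_m ≠ 0` for all
`m`, let `k ≥ 1`, `n ≥ 0`, and suppose there exist `s ∈ ℝ` and a polynomial `p` of degree at
most `k − 1` with `s − s_m = (Δs_m) p(m)` for all `m ≥ n`. Define
`D_n^{(k)} = Σ_{j=0}^k C(k,j)(−1)^{k−j}/Δs_{n+j}` and
`N_n^{(k)} = Σ_{j=0}^k C(k,j)(−1)^{k−j} s_{n+j}/Δs_{n+j}`. If `D_n^{(k)} ≠ 0`, then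
`N_n^{(k)}/D_n^{(k)} = s`: Drummond's transformation is exact for remainders with polynomial
correction terms of degree at most `k − 1`. -/
theorem drummond_exactness
    (s : ℕ → ℝ) (hΔ : ∀ m : ℕ, s (m + 1) - s m ≠ 0)
    (k n : ℕ) (hk : 1 ≤ k)
    (slim : ℝ) (p : Polynomial ℝ) (hdeg : p.degree ≤ ((k - 1 : ℕ) : WithBot ℕ))
    (hp : ∀ m : ℕ, n ≤ m → slim - s m = (s (m + 1) - s m) * p.eval (m : ℝ))
    (hD : (∑ j ∈ Finset.range (k + 1),
      (Nat.choose k j : ℝ) * (-1) ^ (k - j) / (s (n + j + 1) - s (n + j))) ≠ 0) :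
    (∑ j ∈ Finset.range (k + 1),
        (Nat.choose k j : ℝ) * (-1) ^ (k - j) * s (n + j) / (s (n + j + 1) - s (n + j))) /
      (∑ j ∈ Finset.range (k + 1),
        (Nat.choose k j : ℝ) * (-1) ^ (k - j) / (s (n + j + 1) - s (n + j)))
      = slim := by
  have hnat : p.natDegree < k := by
    have := Polynomial.natDegree_le_of_degree_le hdeg
    omega
  rw [sum_mul_div_eq_sum_div_mul_of_sub_eq_mul _ _ _ _ (fun j : ℕ => p.eval ((n : ℝ) + j)) slim
    (fun j _ => hΔ (n + j)) (fun j _ => by exact_mod_cast hp (n + j) (Nat.le_add_right n j))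
    (p.sum_range_choose_mul_neg_one_pow_mul_eval_add_eq_zero hnat n)]
  exact mul_div_cancel_left₀ slim hD
end
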